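/- Under the saturated marginal structural model setup, fix β* ∈ ℝ and suppose Λ : ℝ → ℝ is nondecreasing and right-continuous with Λ(0) = 0, and its Lebesgue–Stieltjes measure μ_Λ satisfies, for every t ∈ [0,τ], F₀(t) + F₁(t) = ∫_{(0,t]} (S₀(u) + e^{β*}S₁(u)) dμ_Λ(u). Then Λ(t) = ∫₀^t (f₀(u)+f₁(u))/(S₀(u)+e^{β*}S₁(u)) du for every t ∈ [0,τ]; i.e., the baseline cumulative hazard Λ*(t) = ∫₀^t (f₀+f₁)/(S₀+e^{β*}S₁) is the unique solution of the first population estimating equation. -/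

import Mathlib

open MeasureTheory Filter

/-- Potential-outcome survival function `S_a(t) = exp(-∫₀ᵗ e^{β(u)·a} λ₀(u) du)`. -/
noncomputable def Ssurv (lam0 bet : ℝ → ℝ) (a t : ℝ) : ℝ :=
  Real.exp (-(∫ u in (0:ℝ)..t, Real.exp (bet u * a) * lam0 u))

/-- Potential-outcome density `f_a(t) = e^{β(t)·a} λ₀(t) S_a(t)`. -/
noncomputable def fdens (lam0 bet : ℝ → ℝ) (a t : ℝ) : ℝ :=
  Real.exp (bet t * a) * lam0 t * Ssurv lam0 bet a t

/-- `ℰ(b,t) = e^b S₁(t) / (S₀(t) + e^b S₁(t))`. -/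
noncomputable def Efun (lam0 bet : ℝ → ℝ) (b t : ℝ) : ℝ :=
  Real.exp b * Ssurv lam0 bet 1 t /
    (Ssurv lam0 bet 0 t + Real.exp b * Ssurv lam0 bet 1 t)

/-- Population full-data estimating function
`h(b) = ∫₀^τ (ℰ(β(t),t) - ℰ(b,t)) (f₀(t) + f₁(t)) dt`. -/
noncomputable def hfun (τ : ℝ) (lam0 bet : ℝ → ℝ) (b : ℝ) : ℝ :=
  ∫ t in (0:ℝ)..τ,
    (Efun lam0 bet (bet t) t - Efun lam0 bet b t) *
      (fdens lam0 bet 0 t + fdens lam0 bet 1 t)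

/-! The cumulative hazard `H_a(t) = ∫₀ᵗ e^{β a} λ₀` is only absolutely continuous, so
`F_a(t) = 1 - e^{-H_a(t)} = ∫₀ᵗ f_a` comes from the fundamental theorem of calculus for absolutely
continuous functions, applied to `e^{-H_a}`. The estimating equation then says that the measures
`(S₀ + e^{β*} S₁) dΛ` and `(f₀ + f₁) du` agree on every `(0, t]`, hence on `(0, τ]`; since the
weight `S₀ + e^{β*} S₁` is continuous and positive, dividing by it identifies `dΛ` on `(0, τ]` with
`(f₀ + f₁)/(S₀ + e^{β*} S₁) du`. -/

open Set

theorem LipschitzOnWith.comp_absolutelyContinuousOnInterval {X Y : Type*} [PseudoMetricSpace X]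
    [PseudoMetricSpace Y] {g : X → Y} {K : NNReal} {s : Set X} {f : ℝ → X} {a b : ℝ}
    (hg : LipschitzOnWith K g s) (hf : AbsolutelyContinuousOnInterval f a b)
    (hfs : MapsTo f (uIcc a b) s) :
    AbsolutelyContinuousOnInterval (g ∘ f) a b := by
  unfold AbsolutelyContinuousOnInterval at hf ⊢
  apply squeeze_zero' ?_ ?_ (by simpa using hf.const_mul (K : ℝ))
  · exact Eventually.of_forall fun _ ↦ Finset.sum_nonneg fun _ _ ↦ dist_nonneg
  rw [eventually_inf_principal]
  filter_upwards with (n, I) hnI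
  rw [Finset.mul_sum]
  gcongr with i hi
  exact hg.dist_le_mul _ (hfs (hnI.1 i hi).1) _ (hfs (hnI.1 i hi).2)

theorem AbsolutelyContinuousOnInterval.rexp {f : ℝ → ℝ} {a b : ℝ}
    (hf : AbsolutelyContinuousOnInterval f a b) :
    AbsolutelyContinuousOnInterval (fun x ↦ Real.exp (f x)) a b := by
  obtain ⟨C, hC⟩ := hf.exists_bound
  obtain ⟨K, hK⟩ := (Real.contDiff_exp (n := 1)).contDiffOn.exists_lipschitzOnWith one_ne_zero
    (convex_closedBall (0 : ℝ) C) (isCompact_closedBall 0 C)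
  exact hK.comp_absolutelyContinuousOnInterval hf fun x hx ↦ mem_closedBall_zero_iff.2 (hC x hx)

theorem integral_mul_exp_neg_integral {h : ℝ → ℝ} {a b : ℝ}
    (hh : IntervalIntegrable h volume a b) :
    ∫ u in a..b, h u * Real.exp (-∫ v in a..u, h v) = 1 - Real.exp (-∫ v in a..b, h v) := by
  have hG : AbsolutelyContinuousOnInterval (fun x ↦ Real.exp (-∫ v in a..x, h v)) a b :=
    (hh.absolutelyContinuousOnInterval_intervalIntegral left_mem_uIcc).fun_neg.rexp
  have hderiv : ∀ᵐ u, u ∈ uIoc a b →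
      deriv (fun x ↦ Real.exp (-∫ v in a..x, h v)) u =
        -(h u * Real.exp (-∫ v in a..u, h v)) := by
    filter_upwards [hh.ae_hasDerivAt_integral] with u hu hmem
    rw [((hu (uIoc_subset_uIcc hmem) a left_mem_uIcc).fun_neg.exp).deriv]
    ring
  have hftc := hG.integral_deriv_eq_sub
  rw [intervalIntegral.integral_congr_ae hderiv, intervalIntegral.integral_neg,
    intervalIntegral.integral_same, neg_zero, Real.exp_zero] at hftc
  linarith

section MeasureFromDensityEquation

variable {μ ν : Measure ℝ} {g F : ℝ → ℝ} {a b : ℝ}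

theorem withDensity_ofReal_restrict_Ioc_eq [IsLocallyFiniteMeasure μ]
    (hg : ContinuousOn g (Icc a b)) (hg_nonneg : ∀ x ∈ Ioc a b, 0 ≤ g x)
    (hF : IntegrableOn F (Ioc a b) ν) (hF_nonneg : ∀ x ∈ Ioc a b, 0 ≤ F x)
    (heq : ∀ x ∈ Icc a b, ∫ u in Ioc a x, g u ∂μ = ∫ u in Ioc a x, F u ∂ν) :
    (μ.restrict (Ioc a b)).withDensity (fun u ↦ ENNReal.ofReal (g u)) =
      (ν.restrict (Ioc a b)).withDensity (fun u ↦ ENNReal.ofReal (F u)) := by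
  have := isFiniteMeasure_withDensity_ofReal hF.hasFiniteIntegral
  refine (Measure.ext_of_Iic _ _ fun y ↦ ?_).symm
  rw [withDensity_apply _ measurableSet_Iic, withDensity_apply _ measurableSet_Iic,
    Measure.restrict_restrict measurableSet_Iic, Measure.restrict_restrict measurableSet_Iic,
    inter_comm, Ioc_inter_Iic]
  rcases le_or_gt (min b y) a with hle | hlt
  · simp [Ioc_eq_empty_of_le hle]
  have hsub : Ioc a (min b y) ⊆ Ioc a b := Ioc_subset_Ioc_right (min_le_left b y)
  have hgi : IntegrableOn g (Ioc a (min b y)) μ :=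
    (hg.integrableOn_compact isCompact_Icc).mono_set (hsub.trans Ioc_subset_Icc_self)
  rw [← ofReal_integral_eq_lintegral_ofReal (hF.mono_set hsub)
      ((ae_restrict_iff' measurableSet_Ioc).2 (ae_of_all _ fun x hx ↦ hF_nonneg x (hsub hx))),
    ← ofReal_integral_eq_lintegral_ofReal hgi
      ((ae_restrict_iff' measurableSet_Ioc).2 (ae_of_all _ fun x hx ↦ hg_nonneg x (hsub hx))),
    heq _ ⟨hlt.le, min_le_left b y⟩]

theorem restrict_Ioc_eq_withDensity_div [IsLocallyFiniteMeasure μ]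
    (hg : ContinuousOn g (Icc a b)) (hg_pos : ∀ x ∈ Ioc a b, 0 < g x)
    (hF : IntegrableOn F (Ioc a b) ν) (hF_nonneg : ∀ x ∈ Ioc a b, 0 ≤ F x)
    (heq : ∀ x ∈ Icc a b, ∫ u in Ioc a x, g u ∂μ = ∫ u in Ioc a x, F u ∂ν) :
    μ.restrict (Ioc a b) =
      (ν.restrict (Ioc a b)).withDensity (fun u ↦ ENNReal.ofReal (F u / g u)) := by
  have hg_ae (ρ : Measure ℝ) :
      AEMeasurable (fun u ↦ ENNReal.ofReal (g u)) (ρ.restrict (Ioc a b)) :=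
    ((hg.mono Ioc_subset_Icc_self).aemeasurable measurableSet_Ioc).ennreal_ofReal
  calc μ.restrict (Ioc a b)
      = ((μ.restrict (Ioc a b)).withDensity fun u ↦ ENNReal.ofReal (g u)).withDensity
          fun u ↦ (ENNReal.ofReal (g u))⁻¹ := by
        refine (withDensity_inv_same₀ (hg_ae μ) ((ae_restrict_iff' measurableSet_Ioc).2
          (ae_of_all _ fun x hx ↦ (ENNReal.ofReal_pos.2 (hg_pos x hx)).ne'))
          (ae_of_all _ fun _ ↦ ENNReal.ofReal_ne_top)).symm
    _ = ((ν.restrict (Ioc a b)).withDensity fun u ↦ ENNReal.ofReal (F u)).withDensity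
          fun u ↦ (ENNReal.ofReal (g u))⁻¹ := by
        rw [withDensity_ofReal_restrict_Ioc_eq hg (fun x hx ↦ (hg_pos x hx).le) hF hF_nonneg heq]
    _ = (ν.restrict (Ioc a b)).withDensity (fun u ↦ ENNReal.ofReal (F u / g u)) := by
        rw [← withDensity_mul₀ hF.aemeasurable.ennreal_ofReal (hg_ae ν).fun_inv]
        refine withDensity_congr_ae
          ((ae_restrict_iff' measurableSet_Ioc).2 (ae_of_all _ fun x hx ↦ ?_))
        rw [Pi.mul_apply, ← div_eq_mul_inv, ← ENNReal.ofReal_div_of_pos (hg_pos x hx)]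

theorem measureReal_Ioc_eq_setIntegral_div [IsLocallyFiniteMeasure μ]
    (hg : ContinuousOn g (Icc a b)) (hg_pos : ∀ x ∈ Ioc a b, 0 < g x)
    (hF : IntegrableOn F (Ioc a b) ν) (hF_nonneg : ∀ x ∈ Ioc a b, 0 ≤ F x)
    (heq : ∀ x ∈ Icc a b, ∫ u in Ioc a x, g u ∂μ = ∫ u in Ioc a x, F u ∂ν)
    {x : ℝ} (hx : x ∈ Icc a b) :
    μ.real (Ioc a x) = ∫ u in Ioc a x, F u / g u ∂ν := by
  have hsub : Ioc a x ⊆ Ioc a b := Ioc_subset_Ioc_right hx.2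
  have hFg : AEStronglyMeasurable (fun u ↦ F u / g u) (ν.restrict (Ioc a x)) :=
    (hF.aestronglyMeasurable.div₀ ((hg.mono Ioc_subset_Icc_self).aestronglyMeasurable
      measurableSet_Ioc)).mono_measure (Measure.restrict_mono hsub le_rfl)
  rw [integral_eq_lintegral_of_nonneg_ae ((ae_restrict_iff' measurableSet_Ioc).2
      (ae_of_all _ fun u hu ↦ div_nonneg (hF_nonneg u (hsub hu)) (hg_pos u (hsub hu)).le)) hFg,
    ← Set.inter_eq_left.2 hsub, ← measureReal_restrict_apply measurableSet_Ioc,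
    restrict_Ioc_eq_withDensity_div hg hg_pos hF hF_nonneg heq, measureReal_def,
    withDensity_apply _ measurableSet_Ioc, Measure.restrict_restrict measurableSet_Ioc]

end MeasureFromDensityEquation

section SurvivalModel

variable {lam0 bet : ℝ → ℝ} {a t : ℝ}

theorem continuousOn_Ssurv
    (hint : IntervalIntegrable (fun u ↦ Real.exp (bet u * a) * lam0 u) volume 0 t) :
    ContinuousOn (Ssurv lam0 bet a) (uIcc 0 t) :=
  (intervalIntegral.continuousOn_primitive_interval' hint left_mem_uIcc).neg.rexp

theorem intervalIntegrable_fdens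
    (hint : IntervalIntegrable (fun u ↦ Real.exp (bet u * a) * lam0 u) volume 0 t) :
    IntervalIntegrable (fdens lam0 bet a) volume 0 t :=
  hint.mul_continuousOn (continuousOn_Ssurv hint)

theorem integral_fdens
    (hint : IntervalIntegrable (fun u ↦ Real.exp (bet u * a) * lam0 u) volume 0 t) :
    ∫ u in (0:ℝ)..t, fdens lam0 bet a u = 1 - Ssurv lam0 bet a t :=
  integral_mul_exp_neg_integral hint

theorem integral_fdens_zero_add_fdens_one
    (hint0 : IntervalIntegrable (fun u ↦ Real.exp (bet u * 0) * lam0 u) volume 0 t)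
    (hint1 : IntervalIntegrable (fun u ↦ Real.exp (bet u * 1) * lam0 u) volume 0 t) :
    ∫ u in (0:ℝ)..t, (fdens lam0 bet 0 u + fdens lam0 bet 1 u) =
      (1 - Ssurv lam0 bet 0 t) + (1 - Ssurv lam0 bet 1 t) := by
  rw [intervalIntegral.integral_add (intervalIntegrable_fdens hint0)
    (intervalIntegrable_fdens hint1), integral_fdens hint0, integral_fdens hint1]

theorem fdens_nonneg (hlam : ∀ u, 0 ≤ lam0 u) (u : ℝ) : 0 ≤ fdens lam0 bet a u :=
  mul_nonneg (mul_nonneg (Real.exp_pos _).le (hlam u)) (Real.exp_pos _).le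

end SurvivalModel

theorem baseline_cumulative_hazard_unique_general
    (τ : ℝ) (lam0 bet : ℝ → ℝ) (bstar : ℝ)
    (hlam_nonneg : ∀ t, 0 ≤ lam0 t)
    (hlam_int : IntegrableOn lam0 (Set.Icc 0 τ))
    (hbetlam_int : IntegrableOn (fun t => Real.exp (bet t) * lam0 t) (Set.Icc 0 τ))
    (Λ : StieltjesFunction ℝ) (hΛ0 : Λ 0 = 0)
    (heq : ∀ t ∈ Set.Icc (0:ℝ) τ,
      ((1 - Ssurv lam0 bet 0 t) + (1 - Ssurv lam0 bet 1 t))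
        = ∫ u in Set.Ioc (0:ℝ) t,
            (Ssurv lam0 bet 0 u + Real.exp bstar * Ssurv lam0 bet 1 u) ∂Λ.measure) :
    ∀ t ∈ Set.Icc (0:ℝ) τ,
      Λ t = ∫ u in (0:ℝ)..t,
        (fdens lam0 bet 0 u + fdens lam0 bet 1 u) /
          (Ssurv lam0 bet 0 u + Real.exp bstar * Ssurv lam0 bet 1 u) := by
  intro t ht
  have hτ : 0 ≤ τ := ht.1.trans ht.2
  have hint0 : IntervalIntegrable (fun u ↦ Real.exp (bet u * 0) * lam0 u) volume 0 τ := by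
    simpa [intervalIntegrable_iff_integrableOn_Ioc_of_le hτ]
      using hlam_int.mono_set Ioc_subset_Icc_self
  have hint1 : IntervalIntegrable (fun u ↦ Real.exp (bet u * 1) * lam0 u) volume 0 τ := by
    simpa [intervalIntegrable_iff_integrableOn_Ioc_of_le hτ]
      using hbetlam_int.mono_set Ioc_subset_Icc_self
  have hcdf (x : ℝ) (hx : x ∈ Icc 0 τ) :
      ∫ u in Ioc 0 x, (fdens lam0 bet 0 u + fdens lam0 bet 1 u) =
        (1 - Ssurv lam0 bet 0 x) + (1 - Ssurv lam0 bet 1 x) := by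
    have hsub : uIcc 0 x ⊆ uIcc 0 τ := uIcc_subset_uIcc_left (Icc_subset_uIcc hx)
    rw [← intervalIntegral.integral_of_le hx.1,
      integral_fdens_zero_add_fdens_one (hint0.mono_set hsub) (hint1.mono_set hsub)]
  have hg : ContinuousOn (fun u ↦ Ssurv lam0 bet 0 u + Real.exp bstar * Ssurv lam0 bet 1 u)
      (Icc 0 τ) := by
    rw [← uIcc_of_le hτ]
    exact (continuousOn_Ssurv hint0).add (continuousOn_const.mul (continuousOn_Ssurv hint1))
  calc Λ t = Λ.measure.real (Ioc 0 t) := by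
        rw [measureReal_def, Λ.measure_Ioc, hΛ0, sub_zero,
          ENNReal.toReal_ofReal (hΛ0 ▸ Λ.mono ht.1)]
    _ = _ := measureReal_Ioc_eq_setIntegral_div hg
        (fun u _ ↦ add_pos (Real.exp_pos _) (mul_pos (Real.exp_pos _) (Real.exp_pos _)))
        ((intervalIntegrable_fdens hint0).add (intervalIntegrable_fdens hint1)).1
        (fun u _ ↦ add_nonneg (fdens_nonneg hlam_nonneg u) (fdens_nonneg hlam_nonneg u))
        (fun x hx ↦ by rw [← heq x hx, hcdf x hx]) ht
    _ = _ := (intervalIntegral.integral_of_le ht.1).symm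

/-- Uniqueness of the baseline cumulative hazard: if `Λ` is nondecreasing, right-continuous
with `Λ(0) = 0` (a Stieltjes function) and its Lebesgue–Stieltjes measure `μ_Λ` satisfies
`F₀(t) + F₁(t) = ∫_{(0,t]} (S₀(u) + e^{β*} S₁(u)) dμ_Λ(u)` for every `t ∈ [0,τ]`, then
`Λ(t) = ∫₀ᵗ (f₀(u)+f₁(u))/(S₀(u)+e^{β*}S₁(u)) du` for every `t ∈ [0,τ]`. -/
theorem baseline_cumulative_hazard_unique
    (τ : ℝ) (hτ : 0 < τ) (lam0 bet : ℝ → ℝ) (bstar : ℝ)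
    (hlam_meas : Measurable lam0) (hbet_meas : Measurable bet)
    (hlam_nonneg : ∀ t, 0 ≤ lam0 t)
    (hlam_int : IntegrableOn lam0 (Set.Icc 0 τ))
    (hbetlam_int : IntegrableOn (fun t => Real.exp (bet t) * lam0 t) (Set.Icc 0 τ))
    (Λ : StieltjesFunction ℝ) (hΛ0 : Λ 0 = 0)
    (heq : ∀ t ∈ Set.Icc (0:ℝ) τ,
      ((1 - Ssurv lam0 bet 0 t) + (1 - Ssurv lam0 bet 1 t))
        = ∫ u in Set.Ioc (0:ℝ) t,
            (Ssurv lam0 bet 0 u + Real.exp bstar * Ssurv lam0 bet 1 u) ∂Λ.measure) :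
    ∀ t ∈ Set.Icc (0:ℝ) τ,
      Λ t = ∫ u in (0:ℝ)..t,
        (fdens lam0 bet 0 u + fdens lam0 bet 1 u) /
          (Ssurv lam0 bet 0 u + Real.exp bstar * Ssurv lam0 bet 1 u) :=
  baseline_cumulative_hazard_unique_general τ lam0 bet bstar hlam_nonneg hlam_int hbetlam_int Λ hΛ0
    heq
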